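/- For every pair j, k ∈ {1,2,3,4} with j ≠ k, the states ψ±_jk = (Ψ_j ± i Ψ_k)/√2 are unit vectors with concurrence 0 (hence product states), and ψ+_jk is orthogonal to ψ−_jk. -/

import Mathlib

/-!
The magic basis is orthonormal both for the Hermitian product `ip` and for the symmetric
bilinear form `detForm`, whose quadratic form is `v ↦ 2 (αδ − βγ)`. Hence for `j ≠ k` and
`ψ_c = (Ψⱼ + c Ψₖ)/√2` one gets `ip ψ_c ψ_d = (1 + c̄ d)/2` and `conc ψ_c = |1 + c²|/2`,
and the choices `c, d ∈ {i, −i}` give norms `1`, concurrence `0` and orthogonality.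
-/

open Matrix Complex
open scoped Matrix Kronecker

noncomputable section

/-- computational basis vector |ab⟩ of ℂ⁴ = ℂ²⊗ℂ², indexed by pairs -/
def ket (a b : Fin 2) : Fin 2 × Fin 2 → ℂ := fun p => if p = (a, b) then 1 else 0

/-- the magic basis Ψ₁, Ψ₂, Ψ₃, Ψ₄ -/
def Psi : Fin 4 → (Fin 2 × Fin 2 → ℂ) :=
  ![((Real.sqrt 2 : ℂ))⁻¹ • (ket 0 0 + ket 1 1),
    (Complex.I * ((Real.sqrt 2 : ℂ))⁻¹) • (ket 0 1 + ket 1 0),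
    ((Real.sqrt 2 : ℂ))⁻¹ • (ket 0 1 - ket 1 0),
    (Complex.I * ((Real.sqrt 2 : ℂ))⁻¹) • (ket 0 0 - ket 1 1)]

/-- concurrence C = 2|αδ − βγ| of a two-qubit state with components (α,β,γ,δ) -/
def conc (v : Fin 2 × Fin 2 → ℂ) : ℝ :=
  2 * ‖v (0, 0) * v (1, 1) - v (0, 1) * v (1, 0)‖

/-- hermitian inner product on ℂ⁴ -/
def ip (v w : Fin 2 × Fin 2 → ℂ) : ℂ :=
  ∑ p : Fin 2 × Fin 2, (starRingEnd ℂ) (v p) * w p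

lemma ip_eq_star_dotProduct (v w : Fin 2 × Fin 2 → ℂ) : ip v w = star v ⬝ᵥ w := rfl

def detForm (v w : Fin 2 × Fin 2 → ℂ) : ℂ :=
  v (0, 0) * w (1, 1) + v (1, 1) * w (0, 0) - v (0, 1) * w (1, 0) - v (1, 0) * w (0, 1)

lemma conc_eq_norm_detForm (v : Fin 2 × Fin 2 → ℂ) : conc v = ‖detForm v v‖ := by
  rw [conc, detForm, ← Real.norm_two, ← Complex.norm_real, ← norm_mul]
  congr 1
  push_cast
  ring

lemma ip_smul_add_smul (s c d : ℂ) (a b : Fin 2 × Fin 2 → ℂ) :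
    ip (s • (a + c • b)) (s • (a + d • b)) =
      star s * s * (ip a a + d * ip a b + star c * ip b a + star c * d * ip b b) := by
  simp only [ip_eq_star_dotProduct, star_smul, star_add, smul_dotProduct, dotProduct_smul,
    add_dotProduct, dotProduct_add, smul_eq_mul]
  ring

lemma detForm_smul_add_smul (s c : ℂ) (a b : Fin 2 × Fin 2 → ℂ) :
    detForm (s • (a + c • b)) (s • (a + c • b)) =
      s ^ 2 * (detForm a a + 2 * c * detForm a b + c ^ 2 * detForm b b) := by
  simp only [detForm, Pi.smul_apply, Pi.add_apply, smul_eq_mul]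
  ring

lemma ip_Psi (j k : Fin 4) : ip (Psi j) (Psi k) = if j = k then 1 else 0 := by
  fin_cases j <;> fin_cases k <;>
    simp [ip, Psi, ket, Fintype.sum_prod_type] <;> ring_nf <;> simp [← Complex.ofReal_pow]

lemma detForm_Psi (j k : Fin 4) : detForm (Psi j) (Psi k) = if j = k then 1 else 0 := by
  fin_cases j <;> fin_cases k <;>
    simp [detForm, Psi, ket] <;> ring_nf <;> simp [← Complex.ofReal_pow]

lemma inv_sqrt_two_sq : ((Real.sqrt 2 : ℂ))⁻¹ ^ 2 = 1 / 2 := by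
  rw [inv_pow, ← Complex.ofReal_pow, Real.sq_sqrt zero_le_two]
  norm_num

lemma ip_Psi_superposition {j k : Fin 4} (hjk : j ≠ k) (c d : ℂ) :
    ip (((Real.sqrt 2 : ℂ))⁻¹ • (Psi j + c • Psi k)) (((Real.sqrt 2 : ℂ))⁻¹ • (Psi j + d • Psi k)) =
      (1 + star c * d) / 2 := by
  rw [ip_smul_add_smul]
  simp only [ip_Psi, if_pos, if_neg hjk, if_neg hjk.symm, star_inv₀, RCLike.star_def,
    conj_ofReal, mul_zero, add_zero, mul_one]
  rw [← sq, inv_sqrt_two_sq]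
  ring

lemma conc_Psi_superposition {j k : Fin 4} (hjk : j ≠ k) (c : ℂ) :
    conc (((Real.sqrt 2 : ℂ))⁻¹ • (Psi j + c • Psi k)) = ‖1 + c ^ 2‖ / 2 := by
  rw [conc_eq_norm_detForm, detForm_smul_add_smul, inv_sqrt_two_sq]
  simp only [detForm_Psi, if_pos, if_neg hjk, mul_zero, add_zero, mul_one, norm_mul, norm_div,
    norm_one, Complex.norm_ofNat]
  ring

/-- For j ≠ k, the states ψ±_jk = (Ψ_j ± iΨ_k)/√2 are orthogonal unit vectors
with concurrence 0 (hence product states). -/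
theorem stmt4 (j k : Fin 4) (hjk : j ≠ k)
    (ψp ψm : Fin 2 × Fin 2 → ℂ)
    (hψp : ψp = ((Real.sqrt 2 : ℂ))⁻¹ • (Psi j + Complex.I • Psi k))
    (hψm : ψm = ((Real.sqrt 2 : ℂ))⁻¹ • (Psi j - Complex.I • Psi k)) :
    ip ψp ψp = 1 ∧ ip ψm ψm = 1 ∧ conc ψp = 0 ∧ conc ψm = 0 ∧ ip ψp ψm = 0 := by
  rw [sub_eq_add_neg, ← neg_smul] at hψm
  subst hψp hψm
  simp only [ip_Psi_superposition hjk, conc_Psi_superposition hjk]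
  simp
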